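/- Let u ∈ H²(𝕋²) have zero mean on the square torus 𝕋² = [0,L]², let {x₁,…,x_N} ⊂ 𝕋² be N = M² points on a regular M×M grid, and set η(u) := max_{1≤i≤N} |u(x_i)|. Then there is an absolute constant c_η such that ‖u‖_{L²}² ≤ c_η L² η(u)² + c_η (L⁴/N²) ‖Δu‖_{L²}². -/

import Mathlib

/-- The wavenumber `(2π/L)|k|` of the lattice mode `k`. -/
noncomputable def wavLen (L : ℝ) (k : ℤ × ℤ) : ℝ :=
  (2 * Real.pi / L) * Real.sqrt ((k.1 : ℝ)^2 + (k.2 : ℝ)^2)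

/-- The function on the torus `[0,L]²` with Fourier coefficients `c`. -/
noncomputable def fourierSum (L : ℝ) (c : ℤ × ℤ → ℂ) (x : ℝ × ℝ) : ℂ :=
  ∑' k : ℤ × ℤ, c k *
    Complex.exp (Complex.I * (((2 * Real.pi / L) * ((k.1 : ℝ) * x.1 + (k.2 : ℝ) * x.2) : ℝ) : ℂ))

/-!
On the `M × M` grid the mode `k` is indistinguishable from every `k' ≡ k (mod M)`, so the nodal
values are the discrete Fourier transform of the aliased coefficients `d m = ∑_{k ≡ m} c k`, and
discrete Parseval gives `∑ ‖d m‖² ≤ η²`. Write each residue class as `k = r + M j` with `r` the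
representative of least modulus, so that `|k| ≥ M |j| / 2`. The coefficient at `j = 0` differs
from `d m` by the sum over `j ≠ 0`, which Cauchy–Schwarz against the weight `|k|⁴` bounds by
`(16 / M⁴) ∑_{j ≠ 0} |j|⁻⁴ · ∑ |k|⁴ ‖c k‖²`; the coefficients with `j ≠ 0` obey
`‖c k‖² ≤ (16 / M⁴) |k|⁴ ‖c k‖²` directly. Summing over the classes gives
`∑ ‖c k‖² ≤ 2 η² + C M⁻⁴ ∑ |k|⁴ ‖c k‖²`.
-/

open Finset ComplexConjugate

def latticeNormSq (k : ℤ × ℤ) : ℝ := (k.1 : ℝ) ^ 2 + (k.2 : ℝ) ^ 2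

lemma latticeNormSq_nonneg (k : ℤ × ℤ) : 0 ≤ latticeNormSq k := by
  unfold latticeNormSq; positivity

lemma one_le_latticeNormSq {k : ℤ × ℤ} (hk : k ≠ 0) : 1 ≤ latticeNormSq k := by
  have hsq {n : ℤ} (hn : n ≠ 0) : (1 : ℝ) ≤ (n : ℝ) ^ 2 :=
    (one_le_sq_iff_one_le_abs _).2 (by exact_mod_cast Int.one_le_abs hn)
  obtain ⟨a, b⟩ := k
  have hab : a ≠ 0 ∨ b ≠ 0 := by by_contra! h; simp_all
  unfold latticeNormSq
  rcases hab with h | h <;> nlinarith [hsq h, sq_nonneg (a : ℝ), sq_nonneg (b : ℝ)]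

lemma inv_latticeNormSq_sq_le_one (k : ℤ × ℤ) : (latticeNormSq k ^ 2)⁻¹ ≤ 1 := by
  rcases eq_or_ne k 0 with rfl | hk
  · simp [latticeNormSq]
  · exact inv_le_one_of_one_le₀ (one_le_pow₀ (one_le_latticeNormSq hk))

-- The `k = 0` term is `0⁻¹ = 0`, so this is the lattice sum `∑_{k ≠ 0} |k|⁻⁴`.
lemma summable_inv_latticeNormSq_sq : Summable fun k : ℤ × ℤ => (latticeNormSq k ^ 2)⁻¹ := by
  rw [← (finTwoArrowEquiv ℤ).summable_iff]
  refine (EisensteinSeries.summable_one_div_norm_rpow (k := 4) (by norm_num)).of_nonneg_of_le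
    (fun x => inv_nonneg.2 (sq_nonneg _)) fun x => ?_
  change (((x 0 : ℝ) ^ 2 + (x 1 : ℝ) ^ 2) ^ 2)⁻¹ ≤ ‖x‖ ^ (-4 : ℝ)
  rcases (norm_nonneg x).eq_or_lt with hx | hx
  · simp [norm_eq_zero.mp hx.symm]
  have hnorm : ‖x‖ ^ 2 ≤ (x 0 : ℝ) ^ 2 + (x 1 : ℝ) ^ 2 := by
    rw [EisensteinSeries.norm_eq_max_natAbs]
    rcases max_choice (x 0).natAbs (x 1).natAbs with h | h <;>
      simp only [h, Nat.cast_natAbs, Int.cast_abs, sq_abs] <;> nlinarith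
  rw [Real.rpow_neg hx.le, show (4 : ℝ) = (2 * 2 : ℕ) by norm_num, Real.rpow_natCast, pow_mul]
  gcongr

namespace ZMod

variable (M : ℕ) [NeZero M]

def residueEquiv : ZMod M × ℤ ≃ ℤ where
  toFun p := p.1.valMinAbs + M * p.2
  invFun k := (k, (k - (k : ZMod M).valMinAbs) / M)
  left_inv p := by
    have hM : (M : ℤ) ≠ 0 := Nat.cast_ne_zero.2 (NeZero.ne M)
    ext <;> simp [coe_valMinAbs, Int.mul_ediv_cancel_left _ hM]
  right_inv k := by
    have hdvd : (M : ℤ) ∣ k - (k : ZMod M).valMinAbs := by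
      rw [← intCast_zmod_eq_zero_iff_dvd]; simp [coe_valMinAbs]
    simp [Int.mul_ediv_cancel' hdvd]

def residueEquiv₂ : (ZMod M × ZMod M) × (ℤ × ℤ) ≃ ℤ × ℤ :=
  (Equiv.prodProdProdComm _ _ _ _).trans ((residueEquiv M).prodCongr (residueEquiv M))

variable {M}

@[simp]
lemma residueEquiv_apply (m : ZMod M) (j : ℤ) : residueEquiv M (m, j) = m.valMinAbs + M * j := rfl

@[simp]
lemma intCast_residueEquiv (m : ZMod M) (j : ℤ) : ((residueEquiv M (m, j) : ℤ) : ZMod M) = m := by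
  simp [coe_valMinAbs]

lemma mul_abs_le_two_mul_abs_residueEquiv (m : ZMod M) (j : ℤ) :
    M * |(j : ℝ)| ≤ 2 * |(residueEquiv M (m, j) : ℝ)| := by
  rcases eq_or_ne j 0 with rfl | hj
  · simp
  have hv : 2 * |(m.valMinAbs : ℝ)| ≤ M := by
    obtain ⟨hlo, hhi⟩ := m.valMinAbs_mem_Ioc
    have : |m.valMinAbs * 2| ≤ M := abs_le.2 ⟨hlo.le, hhi⟩
    rw [abs_mul, abs_two, mul_comm] at this
    exact_mod_cast this
  have hj : (M : ℝ) ≤ M * |(j : ℝ)| :=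
    le_mul_of_one_le_right (Nat.cast_nonneg M) (by exact_mod_cast Int.one_le_abs hj)
  have htri : M * |(j : ℝ)| ≤ |(residueEquiv M (m, j) : ℝ)| + |(m.valMinAbs : ℝ)| := by
    calc M * |(j : ℝ)| = |(residueEquiv M (m, j) : ℝ) - m.valMinAbs| := by
          simp [abs_mul]
      _ ≤ _ := abs_sub _ _
  linarith

@[simp]
lemma residueEquiv₂_apply (m : ZMod M × ZMod M) (j : ℤ × ℤ) :
    residueEquiv₂ M (m, j) = (residueEquiv M (m.1, j.1), residueEquiv M (m.2, j.2)) := rfl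

lemma mul_latticeNormSq_le_residueEquiv₂ (m : ZMod M × ZMod M) (j : ℤ × ℤ) :
    M ^ 2 / 4 * latticeNormSq j ≤ latticeNormSq (residueEquiv₂ M (m, j)) := by
  have h1 := pow_le_pow_left₀ (by positivity) (mul_abs_le_two_mul_abs_residueEquiv m.1 j.1) 2
  have h2 := pow_le_pow_left₀ (by positivity) (mul_abs_le_two_mul_abs_residueEquiv m.2 j.2) 2
  simp only [latticeNormSq, residueEquiv₂_apply, mul_pow, sq_abs] at h1 h2 ⊢
  linarith

lemma tsum_eq_sum_tsum_residueEquiv₂ {X : Type*} [AddCommGroup X] [UniformSpace X]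
    [IsUniformAddGroup X] [CompleteSpace X] [T3Space X] {f : ℤ × ℤ → X} (hf : Summable f) :
    ∑' k, f k = ∑ m, ∑' j, f (residueEquiv₂ M (m, j)) := by
  rw [← (residueEquiv₂ M).tsum_eq]
  exact ((residueEquiv₂ M).summable_iff.2 hf).tsum_prod.trans (tsum_fintype _)

end ZMod

namespace AddChar

variable {R : Type*} [CommRing R]

def compFstAddSnd (ψ : AddChar R ℂ) : AddChar (R × R) ℂ :=
  ψ.compAddMonoidHom (AddMonoidHom.fst R R + AddMonoidHom.snd R R)

@[simp]
lemma compFstAddSnd_apply (ψ : AddChar R ℂ) (x : R × R) : ψ.compFstAddSnd x = ψ (x.1 + x.2) := rfl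

lemma IsPrimitive.compFstAddSnd {ψ : AddChar R ℂ} (hψ : ψ.IsPrimitive) :
    ψ.compFstAddSnd.IsPrimitive := by
  intro a ha h
  have key : ∀ x : R × R, ψ (a.1 * x.1 + a.2 * x.2) = 1 := fun x => by
    simpa using DFunLike.congr_fun h x
  refine ha (Prod.ext (by_contra fun h1 => hψ h1 ?_) (by_contra fun h2 => hψ h2 ?_))
  · ext y; simpa using key (y, 0)
  · ext y; simpa using key (0, y)

lemma sum_norm_sq_sum_mul [Fintype R] [DecidableEq R] {ψ : AddChar R ℂ} (hψ : ψ.IsPrimitive)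
    (d : R → ℂ) :
    ∑ x, ‖∑ m, d m * ψ (m * x)‖ ^ 2 = Fintype.card R * ∑ m, ‖d m‖ ^ 2 := by
  have hconj (z : ℂ) : z * conj z = ((‖z‖ ^ 2 : ℝ) : ℂ) := by
    rw [Complex.mul_conj, Complex.normSq_eq_norm_sq]
  apply Complex.ofReal_injective
  push_cast
  simp_rw [← Complex.ofReal_pow, ← hconj, map_sum, map_mul, ← map_neg_eq_conj, sum_mul_sum]
  have hterm (x i j : R) : d i * ψ (i * x) * (conj (d j) * ψ (-(j * x)))
      = d i * conj (d j) * ψ (x * (i - j)) := by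
    rw [mul_mul_mul_comm, ← map_add_eq_mul]; ring_nf
  simp_rw [hterm]
  rw [sum_comm]
  refine (sum_congr rfl fun i _ => ?_).trans (mul_sum ..).symm
  rw [sum_comm]
  simp_rw [← mul_sum, sum_mulShift _ hψ, sub_eq_zero]
  simp [mul_comm]

end AddChar

section Weighted

variable {ι : Type*}

lemma norm_tsum_sq_le_of_norm_le_mul {a : ι → ℂ} {u g : ι → ℝ} (hu : ∀ i, 0 ≤ u i)
    (hg : ∀ i, 0 ≤ g i) (hau : ∀ i, ‖a i‖ ≤ u i * g i) (hu2 : Summable fun i => u i ^ 2)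
    (hg2 : Summable fun i => g i ^ 2) :
    ‖∑' i, a i‖ ^ 2 ≤ (∑' i, u i ^ 2) * ∑' i, g i ^ 2 := by
  obtain ⟨hug, hHolder⟩ := Real.summable_and_inner_le_Lp_mul_Lq_tsum_of_nonneg .two_two hu hg
    (by simpa using hu2) (by simpa using hg2)
  simp only [Real.rpow_two, ← Real.sqrt_eq_rpow] at hHolder
  have ha : Summable (‖a ·‖) := hug.of_nonneg_of_le (fun _ => norm_nonneg _) hau
  calc ‖∑' i, a i‖ ^ 2 ≤ (∑' i, u i * g i) ^ 2 := by
        gcongr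
        exact (norm_tsum_le_tsum_norm ha).trans (ha.tsum_le_tsum hau hug)
    _ ≤ (√(∑' i, u i ^ 2) * √(∑' i, g i ^ 2)) ^ 2 := by
        gcongr
        exact tsum_nonneg fun i => mul_nonneg (hu i) (hg i)
    _ = (∑' i, u i ^ 2) * ∑' i, g i ^ 2 := by
        rw [mul_pow, Real.sq_sqrt (tsum_nonneg fun i => sq_nonneg _),
          Real.sq_sqrt (tsum_nonneg fun i => sq_nonneg _)]

lemma tsum_norm_sq_le_of_weight [DecidableEq ι] {a : ι → ℂ} {v w : ι → ℝ} {B : ℝ} (i₀ : ι)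
    (ha : Summable a) (ha2 : Summable fun i => ‖a i‖ ^ 2)
    (haw : Summable fun i => w i ^ 2 * ‖a i‖ ^ 2)
    (hv : Summable v) (hv0 : ∀ i, 0 ≤ v i) (hvB : ∀ i, v i ≤ B)
    (hvw : ∀ i ≠ i₀, 1 ≤ v i * w i ^ 2) :
    ∑' i, ‖a i‖ ^ 2 ≤ 2 * ‖∑' i, a i‖ ^ 2 + (2 * ∑' i, v i + B) * ∑' i, w i ^ 2 * ‖a i‖ ^ 2 := by
  set T := ∑' i, w i ^ 2 * ‖a i‖ ^ 2
  have hT : 0 ≤ T := tsum_nonneg fun i => by positivity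
  have htail : ‖∑' i, if i = i₀ then 0 else a i‖ ^ 2 ≤ (∑' i, v i) * T := by
    have := norm_tsum_sq_le_of_norm_le_mul (a := fun i => if i = i₀ then 0 else a i)
      (u := fun i => √(v i)) (g := fun i => |w i| * ‖a i‖) (fun i => Real.sqrt_nonneg _)
      (fun i => by positivity) (fun i => ?_) ?_ ?_
    · simpa [Real.sq_sqrt (hv0 _), mul_pow] using this
    · split_ifs with h
      · simp; positivity
      · have h1 : 1 ≤ √(v i) * |w i| := by
          rw [← Real.sqrt_sq_eq_abs, ← Real.sqrt_mul (hv0 i)]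
          exact Real.one_le_sqrt.2 (hvw i h)
        simpa [mul_assoc] using mul_le_mul_of_nonneg_right h1 (norm_nonneg (a i))
    · simpa [Real.sq_sqrt (hv0 _)] using hv
    · simpa [mul_pow] using haw
  have hhigh : (∑' i, if i = i₀ then 0 else ‖a i‖ ^ 2) ≤ B * T := by
    have hterm (i : ι) : (if i = i₀ then 0 else ‖a i‖ ^ 2) ≤ B * (w i ^ 2 * ‖a i‖ ^ 2) := by
      split_ifs with h
      · exact mul_nonneg ((hv0 i).trans (hvB i)) (by positivity)
      · calc ‖a i‖ ^ 2 ≤ v i * w i ^ 2 * ‖a i‖ ^ 2 :=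
            le_mul_of_one_le_left (by positivity) (hvw i h)
          _ ≤ B * (w i ^ 2 * ‖a i‖ ^ 2) := by
            rw [mul_assoc]; exact mul_le_mul_of_nonneg_right (hvB i) (by positivity)
    have hBT := haw.mul_left B
    calc (∑' i, if i = i₀ then 0 else ‖a i‖ ^ 2) ≤ ∑' i, B * (w i ^ 2 * ‖a i‖ ^ 2) :=
          (hBT.of_nonneg_of_le (fun i => by split_ifs <;> positivity) hterm).tsum_le_tsum hterm hBT
      _ = B * T := tsum_mul_left
  have hlow : ‖a i₀‖ ^ 2 ≤ 2 * ‖∑' i, a i‖ ^ 2 + 2 * ‖∑' i, if i = i₀ then 0 else a i‖ ^ 2 := by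
    set t := ∑' i, if i = i₀ then 0 else a i
    rw [ha.tsum_eq_add_tsum_ite i₀]
    have : ‖a i₀‖ ≤ ‖a i₀ + t‖ + ‖t‖ := by simpa using norm_sub_le (a i₀ + t) t
    nlinarith [sq_nonneg (‖a i₀ + t‖ - ‖t‖), norm_nonneg (a i₀)]
  rw [ha2.tsum_eq_add_tsum_ite i₀]
  linarith

end Weighted

noncomputable def aliasedCoeff (M : ℕ) [NeZero M] (c : ℤ × ℤ → ℂ) (m : ZMod M × ZMod M) : ℂ :=
  ∑' j, c (ZMod.residueEquiv₂ M (m, j))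

lemma fourierSum_grid {L : ℝ} (hL : L ≠ 0) {M : ℕ} [NeZero M] {c : ℤ × ℤ → ℂ}
    (hc : Summable fun k => ‖c k‖) (x : ZMod M × ZMod M) :
    fourierSum L c (x.1.val * (L / M), x.2.val * (L / M)) =
      ∑ m, aliasedCoeff M c m * ZMod.stdAddChar.compFstAddSnd (m * x) := by
  set ψ := (ZMod.stdAddChar (N := M)).compFstAddSnd
  have hL' : (L : ℂ) ≠ 0 := Complex.ofReal_ne_zero.2 hL
  have hchar (k : ℤ × ℤ) :
      Complex.exp (Complex.I * (((2 * Real.pi / L) *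
          ((k.1 : ℝ) * (x.1.val * (L / M)) + (k.2 : ℝ) * (x.2.val * (L / M))) : ℝ) : ℂ)) =
        ψ (((k.1 : ZMod M), (k.2 : ZMod M)) * x) := by
    have hcast :
        (k.1 : ZMod M) * x.1 + k.2 * x.2 = ((k.1 * x.1.val + k.2 * x.2.val : ℤ) : ZMod M) := by
      push_cast; simp only [ZMod.natCast_zmod_val]
    rw [AddChar.compFstAddSnd_apply, Prod.fst_mul, Prod.snd_mul, hcast, ZMod.stdAddChar_coe]
    congr 1
    push_cast
    field_simp
  have hsum : Summable fun k : ℤ × ℤ => c k * ψ (((k.1 : ZMod M), (k.2 : ZMod M)) * x) :=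
    hc.of_norm_bounded fun k => by simp [ψ, ZMod.stdAddChar_apply, Circle.norm_coe]
  simp only [fourierSum, hchar]
  rw [ZMod.tsum_eq_sum_tsum_residueEquiv₂ (M := M) hsum]
  refine sum_congr rfl fun m _ => ?_
  simp only [ZMod.residueEquiv₂_apply, ZMod.intCast_residueEquiv]
  exact tsum_mul_right

lemma sum_norm_sq_aliasedCoeff_le {L : ℝ} (hL : L ≠ 0) {M : ℕ} [NeZero M] {c : ℤ × ℤ → ℂ}
    (hc : Summable fun k => ‖c k‖) {η : ℝ}
    (hη : ∀ i j : Fin M, ‖fourierSum L c ((i : ℕ) * (L / M), (j : ℕ) * (L / M))‖ ≤ η) :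
    ∑ m, ‖aliasedCoeff M c m‖ ^ 2 ≤ η ^ 2 := by
  have hnode (x : ZMod M × ZMod M) :
      ‖∑ m, aliasedCoeff M c m * ZMod.stdAddChar.compFstAddSnd (m * x)‖ ≤ η := by
    simpa only [fourierSum_grid hL hc] using hη ⟨x.1.val, x.1.val_lt⟩ ⟨x.2.val, x.2.val_lt⟩
  have hparseval := AddChar.sum_norm_sq_sum_mul (ZMod.isPrimitive_stdAddChar M).compFstAddSnd
    (aliasedCoeff M c)
  have hcard : 0 < (Fintype.card (ZMod M × ZMod M) : ℝ) := by positivity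
  have hsum := sum_le_sum fun x (_ : x ∈ univ) => pow_le_pow_left₀ (norm_nonneg _) (hnode x) 2
  rw [hparseval, sum_const, card_univ, nsmul_eq_mul] at hsum
  exact le_of_mul_le_mul_left hsum hcard

lemma wavLen_pow_four (L : ℝ) (k : ℤ × ℤ) :
    wavLen L k ^ 4 = (2 * Real.pi / L) ^ 4 * latticeNormSq k ^ 2 := by
  have h : √((k.1 : ℝ) ^ 2 + (k.2 : ℝ) ^ 2) ^ 4 = ((k.1 : ℝ) ^ 2 + (k.2 : ℝ) ^ 2) ^ 2 := by
    rw [pow_mul _ 2 2, Real.sq_sqrt (by positivity)]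
  rw [wavLen, latticeNormSq, mul_pow, h]

lemma tsum_norm_sq_le_sum_aliasedCoeff {M : ℕ} [NeZero M] {c : ℤ × ℤ → ℂ}
    (hc : Summable fun k => ‖c k‖) (hc2 : Summable fun k => ‖c k‖ ^ 2)
    (hcw : Summable fun k => latticeNormSq k ^ 2 * ‖c k‖ ^ 2) :
    ∑' k, ‖c k‖ ^ 2 ≤ 2 * ∑ m, ‖aliasedCoeff M c m‖ ^ 2 +
      16 * (2 * ∑' k, (latticeNormSq k ^ 2)⁻¹ + 1) / M ^ 4 *
        ∑' k, latticeNormSq k ^ 2 * ‖c k‖ ^ 2 := by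
  set e := ZMod.residueEquiv₂ M
  set S := ∑' k, (latticeNormSq k ^ 2)⁻¹
  have hclass (m : ZMod M × ZMod M) :
      ∑' j, ‖c (e (m, j))‖ ^ 2 ≤ 2 * ‖aliasedCoeff M c m‖ ^ 2 +
        16 * (2 * S + 1) / M ^ 4 * ∑' j, latticeNormSq (e (m, j)) ^ 2 * ‖c (e (m, j))‖ ^ 2 := by
    have := tsum_norm_sq_le_of_weight (a := fun j => c (e (m, j)))
      (v := fun j => 16 / M ^ 4 * (latticeNormSq j ^ 2)⁻¹) (w := fun j => latticeNormSq (e (m, j)))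
      (B := 16 / M ^ 4) 0 ((e.summable_iff.2 hc.of_norm).prod_factor m)
      ((e.summable_iff.2 hc2).prod_factor m) ((e.summable_iff.2 hcw).prod_factor m)
      (summable_inv_latticeNormSq_sq.mul_left _) (fun j => by positivity)
      (fun j => mul_le_of_le_one_right (by positivity) (inv_latticeNormSq_sq_le_one j))
      (fun j hj => ?_)
    · rw [tsum_mul_left] at this
      refine this.trans_eq ?_
      rw [aliasedCoeff]
      ring
    · have hM : (M : ℝ) ≠ 0 := Nat.cast_ne_zero.2 (NeZero.ne M)
      have hj0 : latticeNormSq j ≠ 0 := (one_pos.trans_le (one_le_latticeNormSq hj)).ne'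
      calc (1 : ℝ) = 16 / M ^ 4 * (latticeNormSq j ^ 2)⁻¹ * (M ^ 2 / 4 * latticeNormSq j) ^ 2 := by
            field_simp; ring
        _ ≤ _ := by
            have := ZMod.mul_latticeNormSq_le_residueEquiv₂ m j
            gcongr
            exact mul_nonneg (by positivity) (latticeNormSq_nonneg j)
  calc ∑' k, ‖c k‖ ^ 2 = ∑ m, ∑' j, ‖c (e (m, j))‖ ^ 2 := ZMod.tsum_eq_sum_tsum_residueEquiv₂ hc2
    _ ≤ _ := sum_le_sum fun m _ => hclass m
    _ = _ := by
      rw [sum_add_distrib, ← mul_sum, ← mul_sum, ← ZMod.tsum_eq_sum_tsum_residueEquiv₂ hcw]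

/-- Jones–Titi nodal interpolation inequality: for zero-mean `u ∈ H²(𝕋²)` and
`N = M²` nodes on a regular `M × M` grid with `η(u) = maxᵢ |u(xᵢ)|`,
`‖u‖² ≤ c_η L² η(u)² + c_η (L⁴/N²) ‖Δu‖²`, where by Parseval
`‖u‖² = L² Σ‖c k‖²` and `‖Δu‖² = L² Σ |k|⁴ ‖c k‖²`. -/
theorem stmt19 : ∃ cη > (0:ℝ), ∀ L : ℝ, 0 < L → ∀ M : ℕ, 1 ≤ M →
    ∀ c : ℤ × ℤ → ℂ,
    c 0 = 0 →
    Summable (fun k : ℤ × ℤ => ‖c k‖) →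
    Summable (fun k : ℤ × ℤ => ‖c k‖^2) →
    Summable (fun k : ℤ × ℤ => (wavLen L k)^4 * ‖c k‖^2) →
    ∀ η : ℝ,
    (∀ i j : Fin M,
      ‖fourierSum L c ((i : ℕ) * (L/M), (j : ℕ) * (L/M))‖ ≤ η) →
    L^2 * (∑' k : ℤ × ℤ, ‖c k‖^2) ≤
      cη * L^2 * η^2 +
        cη * (L^4 / ((M^2 : ℕ) : ℝ)^2) *
          (L^2 * ∑' k : ℤ × ℤ, (wavLen L k)^4 * ‖c k‖^2) := by
  set S := ∑' k : ℤ × ℤ, (latticeNormSq k ^ 2)⁻¹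
  have hS : 0 ≤ S := tsum_nonneg fun k => inv_nonneg.2 (sq_nonneg _)
  refine ⟨16 * (2 * S + 1), by positivity, fun L hL M hM c _ hc hc2 hc4 η hη => ?_⟩
  have : NeZero M := ⟨by omega⟩
  set Q := ∑' k, latticeNormSq k ^ 2 * ‖c k‖ ^ 2
  have hH2 : ∑' k, wavLen L k ^ 4 * ‖c k‖ ^ 2 = (2 * Real.pi / L) ^ 4 * Q := by
    simp only [wavLen_pow_four, mul_assoc, tsum_mul_left, Q]
  simp only [wavLen_pow_four, mul_assoc] at hc4
  have hcw := (summable_mul_left_iff (by positivity)).1 hc4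
  have hnodes := sum_norm_sq_aliasedCoeff_le hL.ne' hc hη
  have hmodes : ∑' k, ‖c k‖ ^ 2 ≤ 2 * η ^ 2 + 16 * (2 * S + 1) * (Q / M ^ 4) :=
    calc _ ≤ _ := tsum_norm_sq_le_sum_aliasedCoeff hc hc2 hcw
      _ ≤ 2 * η ^ 2 + 16 * (2 * S + 1) / M ^ 4 * Q := by gcongr
      _ = _ := by ring
  have hπ : 1 ≤ (2 * Real.pi) ^ 4 := one_le_pow₀ (by linarith [Real.pi_gt_three])
  have hrhs : L ^ 4 / ((M ^ 2 : ℕ) : ℝ) ^ 2 * (L ^ 2 * ((2 * Real.pi / L) ^ 4 * Q)) =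
      (2 * Real.pi) ^ 4 * (L ^ 2 * (Q / M ^ 4)) := by
    push_cast; field_simp
  rw [hH2, mul_assoc _ (L ^ 4 / _), hrhs]
  have hX : 0 ≤ L ^ 2 * (Q / M ^ 4) := by positivity
  have hLη : 0 ≤ L ^ 2 * η ^ 2 := by positivity
  calc L ^ 2 * ∑' k, ‖c k‖ ^ 2 ≤ L ^ 2 * (2 * η ^ 2 + 16 * (2 * S + 1) * (Q / M ^ 4)) := by
        gcongr
    _ ≤ _ := by
        nlinarith [mul_nonneg (by linarith : (0 : ℝ) ≤ 16 * (2 * S + 1) - 2) hLη,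
          mul_nonneg (mul_nonneg (by positivity : (0 : ℝ) ≤ 16 * (2 * S + 1)) hX) (sub_nonneg.2 hπ)]
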